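/- arXiv:2006.13986 — 5 statements merged into one kernel-verified Lean document; each statement's English description precedes it below -/
import Mathlib

section
/- The Weyl–Moyal star product, defined on complex polynomials in two variables y₁, y₂ by (f ⋆ g)(y) = exp[p₁·p₂] f(y+y₁) g(y+y₂)|_{y₁=y₂=0} where p_i·p_j = -pᵢᵅ ε_{αβ} pⱼᵝ is the symplectic pairing of derivatives, is an associative product. -/
/- STATEMENT 0: The Weyl–Moyal star product on complex polynomials in two
variables, `(f ⋆ g)(y) = exp[−∂_{y₁}ᵅ ε_{αβ} ∂_{y₂}ᵝ] f(y+y₁) g(y+y₂)|_{y₁=y₂=0}`,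
is associative.  We realize the formula by doubling variables: `f` lives in
variables 0,1 and `g` in variables 2,3 of `MvPolynomial (Fin 4) ℂ`; the
bidifferential operator is `∂₁∂₂ − ∂₀∂₃ = −(ε_{αβ} ∂_{1,α}∂_{2,β})`
(with `ε₁₂ = 1`), the exponential is the (finite) Taylor sum, and setting
`y₁ = y₂ = 0` after shifting corresponds to identifying both groups of
variables with `y`. -/

open MvPolynomial

noncomputable section

abbrev P2 := MvPolynomial (Fin 2) ℂ
abbrev P4 := MvPolynomial (Fin 4) ℂ

/-- embed the first factor: variables `y₁` ↦ variables 0,1 -/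
def emb1 : Fin 2 → Fin 4 := fun i => Fin.castLE (by omega) i

/-- embed the second factor: variables `y₂` ↦ variables 2,3 -/
def emb2 : Fin 2 → Fin 4 := fun i => i.addNat 2

/-- identify both groups of variables with `y` (evaluation at `y₁ = y₂ = 0`
after the shift by `y`). -/
def collapse : Fin 4 → Fin 2 := ![0, 1, 0, 1]

/-- the symplectic bidifferential `−∂_{y₁}ᵅ ε_{αβ} ∂_{y₂}ᵝ
  = ∂_{1,2}∂_{2,1} − ∂_{1,1}∂_{2,2}` acting on the doubled variables. -/
def moyalOp : P4 →ₗ[ℂ] P4 :=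
  (pderiv (1 : Fin 4) :
      Derivation ℂ P4 P4).toLinearMap ∘ₗ (pderiv (2 : Fin 4) :
      Derivation ℂ P4 P4).toLinearMap
    - (pderiv (0 : Fin 4) :
      Derivation ℂ P4 P4).toLinearMap ∘ₗ (pderiv (3 : Fin 4) :
      Derivation ℂ P4 P4).toLinearMap

/-- the Weyl–Moyal star product: `exp[p₁·p₂] f(y+y₁)g(y+y₂)|_{y₁=y₂=0}`.
The exponential series is finite on polynomials; all terms beyond
`totalDegree f + totalDegree g` vanish. -/
def moyalStar (f g : P2) : P2 :=
  ∑ n ∈ Finset.range (f.totalDegree + g.totalDegree + 1),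
    ((n.factorial : ℂ))⁻¹ •
      rename collapse ((moyalOp ^ n) (rename emb1 f * rename emb2 g))

/-!
Write `f ⋆ g = μ (exp (P₀₁) (f ⊗ g))`, where `f ⊗ g` puts `f` and `g` into separate copies of
the variables, `P_kl` pairs the gradients in copies `k` and `l` symplectically, and `μ` identifies
all copies. The `P_kl` commute and lower the total degree, so the truncated exponentials satisfy
`exp (A + B) = exp A ∘ exp B`. Identifying copies `0` and `1` of three turns `P₀₁` into
`P₀₂ + P₁₂` (chain rule), and `P₀₁` does not see a factor `h` sitting in copy `2` (Leibniz rule),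
so
`(f ⋆ g) ⋆ h = μ (exp (P₀₂ + P₁₂) (exp (P₀₁) (f ⊗ g ⊗ h))) = μ (exp (P₀₁ + P₀₂ + P₁₂) (f ⊗ g ⊗ h))`,
and symmetrically `f ⋆ (g ⋆ h)` gives the same expression.
-/

open Finset

section TruncatedExponential

variable {K M M' : Type*} [Field K] [AddCommGroup M] [Module K M] [AddCommGroup M'] [Module K M']

def truncExp (N : ℕ) (T : Module.End K M) : Module.End K M :=
  ∑ n ∈ range N, (n.factorial : K)⁻¹ • T ^ n

lemma truncExp_apply (N : ℕ) (T : Module.End K M) (v : M) :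
    truncExp N T v = ∑ n ∈ range N, (n.factorial : K)⁻¹ • (T ^ n) v := by
  simp [truncExp, LinearMap.sum_apply]

lemma truncExp_apply_eq_of_le {N N' : ℕ} {T : Module.End K M} {v : M} (hN : N ≤ N')
    (hv : ∀ n, N ≤ n → (T ^ n) v = 0) : truncExp N' T v = truncExp N T v := by
  rw [truncExp_apply, truncExp_apply]
  refine (sum_subset (range_subset_range.2 hN) fun n _ hn => ?_).symm
  rw [hv n (by simpa using hn), smul_zero]

lemma map_truncExp_apply {T : Module.End K M} {S : Module.End K M'} (φ : M →ₗ[K] M')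
    (h : S ∘ₗ φ = φ ∘ₗ T) (N : ℕ) (v : M) :
    φ (truncExp N T v) = truncExp N S (φ v) := by
  simp only [truncExp_apply, map_sum, map_smul]
  congr! 2 with n
  rw [← LinearMap.comp_apply, ← Module.End.commute_pow_left_of_commute h, LinearMap.comp_apply]

variable [CharZero K]

lemma Commute.truncExp_add_apply {N : ℕ} {A B : Module.End K M} (h : Commute A B) {v : M}
    (hv : ∀ i j, N ≤ i + j → (A ^ i) ((B ^ j) v) = 0) :
    truncExp N (A + B) v = truncExp N A (truncExp N B v) := by
  have binomial (n : ℕ) : (n.factorial : K)⁻¹ • ((A + B) ^ n) v =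
      ∑ i ∈ range (n + 1), ((i.factorial : K)⁻¹ * ((n - i).factorial : K)⁻¹) •
        (A ^ i) ((B ^ (n - i)) v) := by
    rw [h.add_pow, LinearMap.sum_apply, smul_sum]
    refine sum_congr rfl fun i hi => ?_
    have hin : i ≤ n := Nat.lt_succ_iff.1 (mem_range.1 hi)
    rw [Module.End.mul_apply, Module.End.mul_apply, Module.End.natCast_apply,
      ← Nat.cast_smul_eq_nsmul K, map_smul, map_smul, smul_smul, Nat.cast_choose K hin]
    have : (n.factorial : K) ≠ 0 := Nat.cast_ne_zero.2 n.factorial_ne_zero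
    congr 1
    field_simp
  have product : truncExp N A (truncExp N B v) = ∑ i ∈ range N, ∑ j ∈ range N,
      ((i.factorial : K)⁻¹ * (j.factorial : K)⁻¹) • (A ^ i) ((B ^ j) v) := by
    simp only [truncExp_apply, map_sum, map_smul, smul_sum, smul_smul]
    rw [sum_comm]
    simp only [mul_comm]
  rw [product, truncExp_apply, sum_congr rfl fun n _ => binomial n,
    sum_range_diag_flip N fun i j =>
      ((i.factorial : K)⁻¹ * (j.factorial : K)⁻¹) • (A ^ i) ((B ^ j) v)]
  refine sum_congr rfl fun i hi => sum_subset (range_subset_range.2 (Nat.sub_le _ _))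
    fun j _ hj => ?_
  rw [hv i j (by simp at hi hj; omega), smul_zero]

end TruncatedExponential

namespace MvPolynomial

section PartialDerivatives

variable {R σ : Type*} [CommRing R]

lemma commute_pderiv (i j : σ) :
    Commute (pderiv i : Derivation R (MvPolynomial σ R) (MvPolynomial σ R)).toLinearMap
      (pderiv j : Derivation R (MvPolynomial σ R) (MvPolynomial σ R)).toLinearMap := by
  classical
  have h : ⁅pderiv i, pderiv j⁆ = (0 : Derivation R (MvPolynomial σ R) (MvPolynomial σ R)) :=
    derivation_ext fun k => by
      rw [Derivation.commutator_apply]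
      simp [pderiv_X, Pi.single_apply, apply_ite]
  exact LinearMap.ext fun p => sub_eq_zero.1 (DFunLike.congr_fun h p)

lemma pderiv_rename_prodMap {ι κ β : Type*} [Fintype ι] [DecidableEq κ]
    (c : ι → κ) (k : κ) (b : β) (p : MvPolynomial (ι × β) R) :
    pderiv (k, b) (rename (Prod.map c id) p) =
      ∑ i with c i = k, rename (Prod.map c id) (pderiv (i, b) p) := by
  classical
  induction p using MvPolynomial.induction_on with
  | C a => simp
  | add p q hp hq => simp [hp, hq, sum_add_distrib]
  | mul_X p x hp =>
    obtain ⟨i', b'⟩ := x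
    rcases eq_or_ne b' b with rfl | hb <;>
      simp [*, pderiv_X, Pi.single_apply, sum_add_distrib, mul_sum, apply_ite]

end PartialDerivatives

section DegreeLowering

variable {R σ : Type*} [CommRing R]

def LowersDegree (T : Module.End R (MvPolynomial σ R)) : Prop :=
  ∀ p, T p = 0 ∨ (T p).totalDegree < p.totalDegree

lemma lowersDegree_pderiv (i : σ) :
    LowersDegree (pderiv i : Derivation R (MvPolynomial σ R) (MvPolynomial σ R)).toLinearMap := by
  refine fun p => or_iff_not_imp_left.2 fun h => ?_
  have lt (m) (hm : m ∈ (pderiv i p).support) : (m.sum fun _ e => e) < p.totalDegree := by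
    rw [mem_support_iff, coeff_pderiv] at hm
    have := le_totalDegree (mem_support_iff.2 (left_ne_zero_of_mul hm))
    rw [Finsupp.sum_add_index' (fun _ => rfl) (fun _ _ _ => rfl),
      Finsupp.sum_single_index rfl] at this
    omega
  obtain ⟨m, hm⟩ := support_nonempty.2 h
  exact (Finset.sup_lt_iff ((Nat.zero_le _).trans_lt (lt m hm))).2 lt

namespace LowersDegree

variable {T S : Module.End R (MvPolynomial σ R)}

lemma add (hT : LowersDegree T) (hS : LowersDegree S) : LowersDegree (T + S) := by
  intro p
  rcases hT p with h | h <;> rcases hS p with h' | h'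
  case inr.inr => exact .inr ((totalDegree_add _ _).trans_lt (max_lt h h'))
  all_goals simp [h, h']

lemma neg (hT : LowersDegree T) : LowersDegree (-T) := by
  simpa [LowersDegree, totalDegree_neg] using hT

lemma sub (hT : LowersDegree T) (hS : LowersDegree S) : LowersDegree (T - S) := by
  simpa [sub_eq_add_neg] using hT.add hS.neg

lemma mul (hT : LowersDegree T) (hS : LowersDegree S) : LowersDegree (T * S) := by
  intro p
  rcases hS p with h | h
  · simp [h]
  · rcases hT (S p) with h' | h'
    · exact .inl h'
    · exact .inr (h'.trans h)

lemma pow_apply (hT : LowersDegree T) (n : ℕ) (p : MvPolynomial σ R) :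
    (T ^ n) p = 0 ∨ ((T ^ n) p).totalDegree + n ≤ p.totalDegree := by
  induction n generalizing p with
  | zero => simp
  | succ n ih =>
    rw [pow_succ, Module.End.mul_apply]
    rcases hT p with h | h
    · simp [h]
    · rcases ih (T p) with h' | h'
      · exact .inl h'
      · exact .inr (by omega)

lemma pow_apply_eq_zero (hT : LowersDegree T) {n : ℕ} {p : MvPolynomial σ R}
    (hn : p.totalDegree < n) : (T ^ n) p = 0 :=
  (hT.pow_apply n p).resolve_right (by omega)

end LowersDegree

end DegreeLowering

section TruncExp

variable {K σ : Type*} [Field K] {T : Module.End K (MvPolynomial σ K)}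

lemma LowersDegree.truncExp_apply_eq (hT : LowersDegree T) {N N' : ℕ} {p : MvPolynomial σ K}
    (hN : p.totalDegree < N) (hN' : p.totalDegree < N') : truncExp N T p = truncExp N' T p := by
  have (N : ℕ) (hN : p.totalDegree < N) : truncExp N T p = truncExp (p.totalDegree + 1) T p :=
    truncExp_apply_eq_of_le hN fun n hn => hT.pow_apply_eq_zero (by omega)
  rw [this N hN, this N' hN']

lemma LowersDegree.totalDegree_truncExp_apply_le (hT : LowersDegree T) (N : ℕ)
    (p : MvPolynomial σ K) : (truncExp N T p).totalDegree ≤ p.totalDegree := by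
  rw [truncExp_apply]
  refine (totalDegree_finsetSum _ _).trans (Finset.sup_le fun n _ => ?_)
  refine (totalDegree_smul_le _ _).trans ?_
  rcases hT.pow_apply n p with h | h
  · simp [h]
  · omega

lemma LowersDegree.truncExp_add_apply [CharZero K] {A B : Module.End K (MvPolynomial σ K)}
    (hA : LowersDegree A) (hB : LowersDegree B) (hAB : Commute A B) {N : ℕ}
    {p : MvPolynomial σ K} (hp : p.totalDegree < N) :
    truncExp N (A + B) p = truncExp N A (truncExp N B p) :=
  hAB.truncExp_add_apply fun i j hij => by
    rcases hB.pow_apply j p with h | h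
    · rw [h, map_zero]
    · exact hA.pow_apply_eq_zero (by omega)

end TruncExp

section Symplectic

variable {R ι : Type*} [CommRing R]

/-- The variable `(k, α)` is `y_α` in the `k`-th copy; this is the pairing `p_k · p_l`. -/
def symplecticPderiv (k l : ι) : Module.End R (MvPolynomial (ι × Fin 2) R) :=
  (pderiv (k, 1) : Derivation R (MvPolynomial (ι × Fin 2) R) _).toLinearMap *
      (pderiv (l, 0) : Derivation R (MvPolynomial (ι × Fin 2) R) _).toLinearMap -
    (pderiv (k, 0) : Derivation R (MvPolynomial (ι × Fin 2) R) _).toLinearMap *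
      (pderiv (l, 1) : Derivation R (MvPolynomial (ι × Fin 2) R) _).toLinearMap

lemma symplecticPderiv_apply (k l : ι) (p : MvPolynomial (ι × Fin 2) R) :
    symplecticPderiv k l p = pderiv (k, 1) (pderiv (l, 0) p) - pderiv (k, 0) (pderiv (l, 1) p) :=
  rfl

lemma commute_symplecticPderiv (k l k' l' : ι) :
    Commute (symplecticPderiv (R := R) k l) (symplecticPderiv k' l') := by
  have h := commute_pderiv (R := R) (σ := ι × Fin 2)
  have h₂ (a b c d : ι × Fin 2) :=
    ((h a c).mul_right (h a d)).mul_left ((h b c).mul_right (h b d))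
  exact ((h₂ _ _ _ _).sub_right (h₂ _ _ _ _)).sub_left ((h₂ _ _ _ _).sub_right (h₂ _ _ _ _))

lemma lowersDegree_symplecticPderiv (k l : ι) : LowersDegree (symplecticPderiv (R := R) k l) :=
  ((lowersDegree_pderiv _).mul (lowersDegree_pderiv _)).sub
    ((lowersDegree_pderiv _).mul (lowersDegree_pderiv _))

lemma symplecticPderiv_rename {κ : Type*} [Fintype ι] [DecidableEq κ] (c : ι → κ) (k l : κ)
    (p : MvPolynomial (ι × Fin 2) R) :
    symplecticPderiv k l (rename (Prod.map c id) p) =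
      rename (Prod.map c id) (∑ i with c i = k, ∑ j with c j = l, symplecticPderiv i j p) := by
  simp only [symplecticPderiv_apply, pderiv_rename_prodMap, map_sum, sum_sub_distrib, map_sub]
  rw [sum_comm, sum_comm (s := {j | c j = l})]

lemma symplecticPderiv_rename_of_injective {κ : Type*} {j : ι → κ} (hj : Function.Injective j)
    (k l : ι) (p : MvPolynomial (ι × Fin 2) R) :
    symplecticPderiv (j k) (j l) (rename (Prod.map j id) p) =
      rename (Prod.map j id) (symplecticPderiv k l p) := by
  have hj' : Function.Injective (Prod.map j (id : Fin 2 → Fin 2)) :=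
    hj.prodMap Function.injective_id
  rw [symplecticPderiv_apply, symplecticPderiv_apply, map_sub, ← pderiv_rename hj',
    ← pderiv_rename hj', ← pderiv_rename hj', ← pderiv_rename hj']
  rfl

lemma symplecticPderiv_mul_rename_mk {k l m : ι} (hk : m ≠ k) (hl : m ≠ l)
    (p : MvPolynomial (ι × Fin 2) R) (q : MvPolynomial (Fin 2) R) :
    symplecticPderiv k l (p * rename (Prod.mk m) q) =
      symplecticPderiv k l p * rename (Prod.mk m) q := by
  classical
  have (i : ι) (hi : m ≠ i) (α : Fin 2) : pderiv (i, α) (rename (Prod.mk m) q) = 0 :=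
    pderiv_eq_zero_of_notMem_vars fun h => by
      obtain ⟨β, -, hβ⟩ := Finset.mem_image.1 (vars_rename _ q h)
      exact hi (congrArg Prod.fst hβ)
  simp [symplecticPderiv_apply, this k hk, this l hl]
  ring

end Symplectic

section SymplecticExp

variable {K ι : Type*} [Field K]

lemma rename_truncExp_symplecticPderiv {κ : Type*} [Fintype ι] [DecidableEq κ] (c : ι → κ)
    (k l : κ) (N : ℕ) (p : MvPolynomial (ι × Fin 2) K) :
    rename (Prod.map c id)
        (truncExp N (∑ i with c i = k, ∑ j with c j = l, symplecticPderiv i j) p) =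
      truncExp N (symplecticPderiv k l) (rename (Prod.map c id) p) :=
  map_truncExp_apply (rename (Prod.map c id)).toLinearMap
    (LinearMap.ext fun q => by simp [symplecticPderiv_rename]) N p

lemma rename_truncExp_symplecticPderiv_of_injective {κ : Type*} {j : ι → κ}
    (hj : Function.Injective j) (k l : ι) (N : ℕ) (p : MvPolynomial (ι × Fin 2) K) :
    rename (Prod.map j id) (truncExp N (symplecticPderiv k l) p) =
      truncExp N (symplecticPderiv (j k) (j l)) (rename (Prod.map j id) p) :=
  map_truncExp_apply (rename (Prod.map j id)).toLinearMap
    (LinearMap.ext fun q => symplecticPderiv_rename_of_injective hj k l q) N p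

lemma truncExp_symplecticPderiv_mul_rename_mk {k l m : ι} (hk : m ≠ k) (hl : m ≠ l) (N : ℕ)
    (p : MvPolynomial (ι × Fin 2) K) (q : MvPolynomial (Fin 2) K) :
    truncExp N (symplecticPderiv k l) (p * rename (Prod.mk m) q) =
      truncExp N (symplecticPderiv k l) p * rename (Prod.mk m) q :=
  (map_truncExp_apply (LinearMap.mulRight K (rename (Prod.mk m) q))
    (LinearMap.ext fun p => symplecticPderiv_mul_rename_mk hk hl p q) N p).symm

end SymplecticExp

lemma totalDegree_rename_mul_rename_le {R σ τ υ : Type*} [CommSemiring R] (φ : σ → υ)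
    (ψ : τ → υ) (p : MvPolynomial σ R) (q : MvPolynomial τ R) :
    (rename φ p * rename ψ q).totalDegree ≤ p.totalDegree + q.totalDegree :=
  (totalDegree_mul _ _).trans (add_le_add (totalDegree_rename_le _ _) (totalDegree_rename_le _ _))

end MvPolynomial

/-- Reads the variables of `P4` as two copies of those of `P2`, matching `emb1` and `emb2`. -/
def doubledIndex : Fin 4 → Fin 2 × Fin 2 := ![(0, 0), (0, 1), (1, 0), (1, 1)]

lemma moyalStar_eq_rename_truncExp (f g : P2) {N : ℕ} (hN : f.totalDegree + g.totalDegree < N) :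
    moyalStar f g = rename Prod.snd (truncExp N (symplecticPderiv (0 : Fin 2) 1)
      (rename (Prod.mk 0) f * rename (Prod.mk 1) g)) := by
  have he : Function.Injective doubledIndex := by decide
  have hmoyal : symplecticPderiv 0 1 ∘ₗ (rename doubledIndex).toLinearMap =
      (rename doubledIndex).toLinearMap ∘ₗ moyalOp := LinearMap.ext fun p => by
    change pderiv (doubledIndex 1) (pderiv (doubledIndex 2) (rename doubledIndex p)) -
      pderiv (doubledIndex 0) (pderiv (doubledIndex 3) (rename doubledIndex p)) = _
    simp [pderiv_rename he, moyalOp]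
  have hdeg : (rename (Prod.mk (0 : Fin 2)) f * rename (Prod.mk 1) g).totalDegree <
      f.totalDegree + g.totalDegree + 1 :=
    Nat.lt_add_one_of_le (totalDegree_rename_mul_rename_le _ _ f g)
  calc moyalStar f g = rename collapse (truncExp (f.totalDegree + g.totalDegree + 1) moyalOp
        (rename emb1 f * rename emb2 g)) := by
        simp [moyalStar, truncExp_apply, map_sum]
    _ = rename Prod.snd (truncExp (f.totalDegree + g.totalDegree + 1)
        (symplecticPderiv (0 : Fin 2) 1) (rename (Prod.mk 0) f * rename (Prod.mk 1) g)) := by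
        rw [show collapse = Prod.snd ∘ doubledIndex by decide, ← rename_rename]
        congr 1
        rw [← AlgHom.toLinearMap_apply, map_truncExp_apply _ hmoyal, AlgHom.toLinearMap_apply,
          map_mul, rename_rename, rename_rename,
          show doubledIndex ∘ emb1 = Prod.mk 0 by decide,
          show doubledIndex ∘ emb2 = Prod.mk 1 by decide]
    _ = _ := by rw [(lowersDegree_symplecticPderiv 0 1).truncExp_apply_eq (N' := N) hdeg (by omega)]

lemma totalDegree_moyalStar_le (f g : P2) :
    (moyalStar f g).totalDegree ≤ f.totalDegree + g.totalDegree := by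
  rw [moyalStar_eq_rename_truncExp f g (Nat.lt_add_one _)]
  exact (totalDegree_rename_le _ _).trans
    (((lowersDegree_symplecticPderiv 0 1).totalDegree_truncExp_apply_le _ _).trans
      (totalDegree_rename_mul_rename_le _ _ f g))

def tensor₃ (f g h : P2) : MvPolynomial (Fin 3 × Fin 2) ℂ :=
  rename (Prod.mk 0) f * rename (Prod.mk 1) g * rename (Prod.mk 2) h

def symplecticPderiv₃ : Module.End ℂ (MvPolynomial (Fin 3 × Fin 2) ℂ) :=
  symplecticPderiv 0 1 + symplecticPderiv 0 2 + symplecticPderiv 1 2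

lemma totalDegree_tensor₃_le (f g h : P2) :
    (tensor₃ f g h).totalDegree ≤ f.totalDegree + g.totalDegree + h.totalDegree :=
  (totalDegree_mul _ _).trans
    (add_le_add (totalDegree_rename_mul_rename_le _ _ f g) (totalDegree_rename_le _ _))

lemma moyalStar_moyalStar_left (f g h : P2) {N : ℕ}
    (hN : f.totalDegree + g.totalDegree + h.totalDegree < N) :
    moyalStar (moyalStar f g) h =
      rename Prod.snd (truncExp N symplecticPderiv₃ (tensor₃ f g h)) := by
  let c : Fin 3 → Fin 2 := ![0, 0, 1]
  let j : Fin 2 → Fin 3 := ![0, 1]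
  have lift_fg : rename (Prod.mk 0) (rename Prod.snd (truncExp N (symplecticPderiv (0 : Fin 2) 1)
      (rename (Prod.mk 0) f * rename (Prod.mk 1) g))) =
      rename (Prod.map c id) (truncExp N (symplecticPderiv (0 : Fin 3) 1)
        (rename (Prod.mk 0) f * rename (Prod.mk 1) g)) := by
    rw [rename_rename, show Prod.mk 0 ∘ Prod.snd = Prod.map c id ∘ Prod.map j id by decide,
      ← rename_rename, rename_truncExp_symplecticPderiv_of_injective (j := j) (by decide),
      map_mul, rename_rename, rename_rename, show Prod.map j id ∘ Prod.mk 0 = Prod.mk 0 by decide,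
      show Prod.map j id ∘ Prod.mk 1 = Prod.mk 1 by decide]
    rfl
  have lift_h : rename (Prod.mk (1 : Fin 2)) h = rename (Prod.map c id) (rename (Prod.mk 2) h) := by
    rw [rename_rename]; rfl
  have hfg := totalDegree_moyalStar_le f g
  rw [moyalStar_eq_rename_truncExp _ h (N := N) (by omega),
    moyalStar_eq_rename_truncExp f g (N := N) (by omega), lift_fg, lift_h, ← map_mul,
    ← truncExp_symplecticPderiv_mul_rename_mk (by decide) (by decide),
    ← rename_truncExp_symplecticPderiv c, rename_rename]
  have fiber : ∑ i with c i = 0, ∑ k with c k = 1, symplecticPderiv (R := ℂ) i k =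
      symplecticPderiv 0 2 + symplecticPderiv 1 2 := by
    simp [Finset.sum_filter, Fin.sum_univ_three, c]
  have low (a b : Fin 3) := lowersDegree_symplecticPderiv (R := ℂ) a b
  have comm (a b a' b' : Fin 3) := commute_symplecticPderiv (R := ℂ) a b a' b'
  rw [fiber, symplecticPderiv₃, add_rotate, LowersDegree.truncExp_add_apply
    ((low 0 2).add (low 1 2)) (low 0 1) ((comm 0 2 0 1).add_left (comm 1 2 0 1))
    ((totalDegree_tensor₃_le f g h).trans_lt hN)]
  rfl

lemma moyalStar_moyalStar_right (f g h : P2) {N : ℕ}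
    (hN : f.totalDegree + g.totalDegree + h.totalDegree < N) :
    moyalStar f (moyalStar g h) =
      rename Prod.snd (truncExp N symplecticPderiv₃ (tensor₃ f g h)) := by
  let c : Fin 3 → Fin 2 := ![0, 1, 1]
  let j : Fin 2 → Fin 3 := ![1, 2]
  have lift_gh : rename (Prod.mk 1) (rename Prod.snd (truncExp N (symplecticPderiv (0 : Fin 2) 1)
      (rename (Prod.mk 0) g * rename (Prod.mk 1) h))) =
      rename (Prod.map c id) (truncExp N (symplecticPderiv (1 : Fin 3) 2)
        (rename (Prod.mk 1) g * rename (Prod.mk 2) h)) := by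
    rw [rename_rename, show Prod.mk 1 ∘ Prod.snd = Prod.map c id ∘ Prod.map j id by decide,
      ← rename_rename, rename_truncExp_symplecticPderiv_of_injective (j := j) (by decide),
      map_mul, rename_rename, rename_rename, show Prod.map j id ∘ Prod.mk 0 = Prod.mk 1 by decide,
      show Prod.map j id ∘ Prod.mk 1 = Prod.mk 2 by decide]
    rfl
  have lift_f : rename (Prod.mk (0 : Fin 2)) f = rename (Prod.map c id) (rename (Prod.mk 0) f) := by
    rw [rename_rename]; rfl
  have fiber : ∑ i with c i = 0, ∑ k with c k = 1, symplecticPderiv (R := ℂ) i k =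
      symplecticPderiv 0 1 + symplecticPderiv 0 2 := by
    simp [Finset.sum_filter, Fin.sum_univ_three, c]
  have low (a b : Fin 3) := lowersDegree_symplecticPderiv (R := ℂ) a b
  have comm (a b a' b' : Fin 3) := commute_symplecticPderiv (R := ℂ) a b a' b'
  have hgh := totalDegree_moyalStar_le g h
  rw [moyalStar_eq_rename_truncExp f _ (N := N) (by omega),
    moyalStar_eq_rename_truncExp g h (N := N) (by omega), lift_gh, lift_f, ← map_mul, mul_comm,
    ← truncExp_symplecticPderiv_mul_rename_mk (by decide) (by decide),
    ← rename_truncExp_symplecticPderiv c, rename_rename, fiber, symplecticPderiv₃,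
    LowersDegree.truncExp_add_apply ((low 0 1).add (low 0 2)) (low 1 2)
      ((comm 0 1 1 2).add_left (comm 0 2 1 2)) ((totalDegree_tensor₃_le f g h).trans_lt hN)]
  rw [tensor₃, mul_rotate (rename (Prod.mk 0) f)]
  rfl

/-- The Weyl–Moyal star product is associative. -/
theorem moyalStar_assoc (f g h : P2) :
    moyalStar (moyalStar f g) h = moyalStar f (moyalStar g h) := by
  have hN := Nat.lt_add_one (f.totalDegree + g.totalDegree + h.totalDegree)
  rw [moyalStar_moyalStar_left f g h hN, moyalStar_moyalStar_right f g h hN]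

end
end

section
/- Every derivation of the first Weyl algebra A₁ over a field of characteristic zero is inner, i.e., of the form a ↦ [x, a] for some x ∈ A₁. -/
/- STATEMENT 2: Every derivation of the first Weyl algebra A₁ over a field of
characteristic zero is inner: D a = x*a - a*x for some x. -/

/-- The first Weyl algebra: the free algebra on generators `q` (encoded `true`)
and `p` (encoded `false`) modulo the relation `q*p = p*q + 1`. -/
inductive WeylRel (k : Type*) [CommRing k] :
    FreeAlgebra k Bool → FreeAlgebra k Bool → Prop
  | qp : WeylRel k (FreeAlgebra.ι k true * FreeAlgebra.ι k false)
      (FreeAlgebra.ι k false * FreeAlgebra.ι k true + 1)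

/-- The first Weyl algebra `A₁` over `k`. -/
abbrev Weyl (k : Type*) [CommRing k] := RingQuot (WeylRel k)

/-- the generator `q` of the Weyl algebra -/
noncomputable def Wq (k : Type*) [CommRing k] : Weyl k :=
  RingQuot.mkRingHom (WeylRel k) (FreeAlgebra.ι k true)

/-- the generator `p` of the Weyl algebra -/
noncomputable def Wp (k : Type*) [CommRing k] : Weyl k :=
  RingQuot.mkRingHom (WeylRel k) (FreeAlgebra.ι k false)

/-!
Writing monomials in the order `pⁱ g(q)` identifies `A₁` with `k[Y][X]` (`orderedEval`, injective
because acting on `1` through `polyRep` inverts it), and in these coordinates `[q, ·]` is `∂/∂X`.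
In characteristic zero `∂/∂X` is surjective with kernel `k[Y]`, so `[q, ·]` is surjective and the
centralizer of `q` is `k[q]`. Given `D`, pick `x₀` with `D q = [x₀, q]`; applying `D` to
`qp - pq = 1` shows that `D p - [x₀, p]` commutes with `q`, so it is some `g(q) = [G(q), p]` with
`G' = g`. Then `D` and `[x₀ + G(q), ·]` agree on `q` and `p`, hence everywhere.
-/

open Polynomial

namespace Polynomial

theorem derivative_surjective_of_algebra_rat {R : Type*} [CommRing R] [Algebra ℚ R] :
    Function.Surjective (derivative : R[X] → R[X]) := by
  intro f
  induction f using Polynomial.induction_on' with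
  | add f g hf hg =>
    obtain ⟨F, rfl⟩ := hf
    obtain ⟨G, rfl⟩ := hg
    exact ⟨F + G, derivative_add⟩
  | monomial n a =>
    refine ⟨monomial (n + 1) (((n : ℚ) + 1)⁻¹ • a), ?_⟩
    rw [derivative_monomial, Nat.add_sub_cancel, smul_mul_assoc, ← nsmul_eq_mul',
      ← Nat.cast_smul_eq_nsmul ℚ, smul_smul]
    push_cast
    rw [inv_mul_cancel₀ (Nat.cast_add_one_ne_zero n), one_smul]

section Commutator

variable {R A : Type*} [CommRing R] [Ring A] [Algebra R A] {a b : A}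

theorem mul_aeval_sub_aeval_mul (h : a * b - b * a = 1) (g : R[X]) :
    a * aeval b g - aeval b g * a = aeval b (derivative g) := by
  induction g using Polynomial.induction_on with
  | C c => simp [Algebra.commutes]
  | add f g hf hg => simp only [map_add, mul_add, add_mul, ← hf, ← hg]; abel
  | monomial n c ih =>
    rw [pow_succ, ← mul_assoc]
    generalize C c * X ^ n = f at ih ⊢
    simp only [derivative_mul, derivative_X, map_add, map_mul, aeval_X, mul_one, ← ih]
    linear_combination (norm := noncomm_ring) aeval b f * h

theorem aeval_mul_sub_mul_aeval (h : a * b - b * a = 1) (g : R[X]) :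
    aeval a g * b - b * aeval a g = aeval a (derivative g) := by
  have h' : -b * a - a * -b = 1 := by rw [neg_mul, mul_neg, sub_neg_eq_add, neg_add_eq_sub, h]
  rw [← mul_aeval_sub_aeval_mul h', neg_mul, mul_neg, sub_neg_eq_add, neg_add_eq_sub]

end Commutator

theorem commute_aeval_self {R A : Type*} [CommSemiring R] [Semiring A] [Algebra R A]
    (a : A) (g : R[X]) : Commute a (aeval a g) :=
  Algebra.commute_of_mem_adjoin_self (aeval_mem_adjoin_singleton R a)

end Polynomial

theorem apply_one_eq_zero_of_leibniz {A : Type*} [Ring A] {D : A → A}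
    (hD : ∀ a b, D (a * b) = D a * b + a * D b) : D 1 = 0 := by
  simpa using hD 1 1

namespace Weyl

variable {k : Type*} [CommRing k]

theorem Wq_mul_Wp : Wq k * Wp k = Wp k * Wq k + 1 := by
  have h := RingQuot.mkRingHom_rel (WeylRel.qp (k := k))
  simp only [map_mul, map_add, map_one] at h
  exact h

theorem Wq_mul_Wp_sub_Wp_mul_Wq : Wq k * Wp k - Wp k * Wq k = 1 := by
  rw [Wq_mul_Wp, add_sub_cancel_left]

theorem Wq_eq_mkAlgHom : Wq k = RingQuot.mkAlgHom k (WeylRel k) (FreeAlgebra.ι k true) := by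
  rw [Wq, ← RingQuot.mkAlgHom_coe k]; rfl

theorem Wp_eq_mkAlgHom : Wp k = RingQuot.mkAlgHom k (WeylRel k) (FreeAlgebra.ι k false) := by
  rw [Wp, ← RingQuot.mkAlgHom_coe k]; rfl

@[elab_as_elim]
theorem induction_on {P : Weyl k → Prop} (a : Weyl k)
    (algebraMap : ∀ c : k, P (algebraMap k (Weyl k) c)) (Wq : P (Wq k)) (Wp : P (Wp k))
    (add : ∀ a b, P a → P b → P (a + b)) (mul : ∀ a b, P a → P b → P (a * b)) : P a := by
  obtain ⟨x, rfl⟩ := RingQuot.mkAlgHom_surjective k (WeylRel k) a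
  induction x using FreeAlgebra.induction with
  | grade0 c => rw [AlgHom.commutes]; exact algebraMap c
  | grade1 b =>
    cases b
    · rwa [← Wp_eq_mkAlgHom]
    · rwa [← Wq_eq_mkAlgHom]
  | add a b ha hb => rw [map_add]; exact add _ _ ha hb
  | mul a b ha hb => rw [map_mul]; exact mul _ _ ha hb

variable (k) in
/-- `∑ Xⁱ gᵢ(Y) ↦ ∑ pⁱ gᵢ(q)`: the outer variable stands for `p`, the coefficients are evaluated
at `q`. -/
noncomputable def orderedEval : k[X][X] →ₗ[k] Weyl k :=
  lsum fun i => LinearMap.mulLeft k (Wp k ^ i) ∘ₗ (aeval (Wq k)).toLinearMap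

theorem orderedEval_monomial (i : ℕ) (g : k[X]) :
    orderedEval k (monomial i g) = Wp k ^ i * aeval (Wq k) g := by
  simp [orderedEval]

theorem orderedEval_C (g : k[X]) : orderedEval k (C g) = aeval (Wq k) g := by
  rw [← monomial_zero_left, orderedEval_monomial, pow_zero, one_mul]

theorem orderedEval_X_mul (f : k[X][X]) : orderedEval k (X * f) = Wp k * orderedEval k f := by
  induction f using Polynomial.induction_on' with
  | add f g hf hg => rw [mul_add, map_add, hf, hg, map_add, mul_add]
  | monomial i g =>
    rw [X_mul_monomial, orderedEval_monomial, orderedEval_monomial, pow_succ', mul_assoc]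

theorem orderedEval_mul_C_X (f : k[X][X]) : orderedEval k (f * C X) = orderedEval k f * Wq k := by
  induction f using Polynomial.induction_on' with
  | add f g hf hg => rw [add_mul, map_add, hf, hg, map_add, add_mul]
  | monomial i g =>
    rw [monomial_mul_C, orderedEval_monomial, orderedEval_monomial, map_mul, aeval_X, mul_assoc]

theorem Wq_mul_orderedEval_sub (f : k[X][X]) :
    Wq k * orderedEval k f - orderedEval k f * Wq k = orderedEval k (derivative f) := by
  induction f using Polynomial.induction_on' with
  | add f g hf hg => simp only [map_add, mul_add, add_mul, ← hf, ← hg]; abel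
  | monomial i g =>
    have hpow : Wq k * Wp k ^ i - Wp k ^ i * Wq k = i * Wp k ^ (i - 1) := by
      simpa [derivative_X_pow] using
        mul_aeval_sub_aeval_mul (R := k) (Wq_mul_Wp_sub_Wp_mul_Wq (k := k)) (X ^ i)
    rw [orderedEval_monomial, derivative_monomial, orderedEval_monomial, map_mul, map_natCast,
      mul_assoc, ← (commute_aeval_self (Wq k) g).eq, ← mul_assoc, ← mul_assoc, ← sub_mul, hpow,
      (Nat.cast_commute i _).eq, mul_assoc, (Nat.cast_commute i _).eq]

theorem Wq_mul_orderedEval (f : k[X][X]) :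
    Wq k * orderedEval k f = orderedEval k (f * C X + derivative f) := by
  rw [map_add, orderedEval_mul_C_X, ← Wq_mul_orderedEval_sub, add_sub_cancel]

theorem orderedEval_surjective : Function.Surjective (orderedEval k) := by
  suffices h : ∀ a : Weyl k, ∀ r ∈ LinearMap.range (orderedEval k),
      a * r ∈ LinearMap.range (orderedEval k) by
    intro a
    simpa using h a 1 ⟨1, by rw [← C_1, orderedEval_C, map_one]⟩
  intro a
  induction a using Weyl.induction_on with
  | algebraMap c =>
    intro r hr
    rw [← Algebra.smul_def]
    exact Submodule.smul_mem _ c hr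
  | Wq => rintro _ ⟨f, rfl⟩; exact ⟨_, (Wq_mul_orderedEval f).symm⟩
  | Wp => rintro _ ⟨f, rfl⟩; exact ⟨_, orderedEval_X_mul f⟩
  | add a b ha hb => intro r hr; rw [add_mul]; exact add_mem (ha r hr) (hb r hr)
  | mul a b ha hb => intro r hr; rw [mul_assoc]; exact ha _ (hb r hr)

variable (k) in
/-- `q` acts on `k[Y][X]` as `Y + ∂/∂X` and `p` as multiplication by `X`. -/
noncomputable def polyRep : Weyl k →ₐ[k] Module.End k k[X][X] :=
  RingQuot.liftAlgHom k ⟨FreeAlgebra.lift k fun b =>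
      if b then LinearMap.mulLeft k (C X) + derivative.restrictScalars k
      else LinearMap.mulLeft k X, by
    rintro _ _ ⟨⟩
    ext1 f
    simp only [FreeAlgebra.lift_ι_apply, Bool.false_eq_true, if_true, if_false, map_mul, map_add,
      map_one, Module.End.mul_apply, LinearMap.add_apply, LinearMap.mulLeft_apply,
      LinearMap.restrictScalars_apply, Module.End.one_apply, derivative_mul, derivative_X]
    ring⟩

theorem polyRep_Wq :
    polyRep k (Wq k) = LinearMap.mulLeft k (C X) + derivative.restrictScalars k := by
  rw [Wq_eq_mkAlgHom, polyRep, RingQuot.liftAlgHom_mkAlgHom_apply, FreeAlgebra.lift_ι_apply]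
  rfl

theorem polyRep_Wp : polyRep k (Wp k) = LinearMap.mulLeft k X := by
  rw [Wp_eq_mkAlgHom, polyRep, RingQuot.liftAlgHom_mkAlgHom_apply, FreeAlgebra.lift_ι_apply]
  rfl

theorem polyRep_aeval_Wq_one (g : k[X]) : polyRep k (aeval (Wq k) g) 1 = C g := by
  rw [← aeval_algHom_apply, polyRep_Wq]
  induction g using Polynomial.induction_on with
  | C c =>
    rw [aeval_C, Module.algebraMap_end_apply, ← C_1, smul_C, ← C_1, smul_C, smul_eq_mul, mul_one]
  | add f g hf hg => rw [map_add, LinearMap.add_apply, hf, hg, C_add]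
  | monomial n c ih =>
    rw [pow_succ', mul_left_comm, map_mul, Module.End.mul_apply, ih, aeval_X,
      LinearMap.add_apply, LinearMap.mulLeft_apply, LinearMap.restrictScalars_apply, derivative_C,
      add_zero, ← C_mul]

theorem polyRep_orderedEval_one (f : k[X][X]) : polyRep k (orderedEval k f) 1 = f := by
  induction f using Polynomial.induction_on' with
  | add f g hf hg => rw [map_add, map_add, LinearMap.add_apply, hf, hg]
  | monomial i g =>
    rw [orderedEval_monomial, map_mul, Module.End.mul_apply, polyRep_aeval_Wq_one, map_pow,
      polyRep_Wp, LinearMap.pow_mulLeft, LinearMap.mulLeft_apply, X_pow_mul,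
      C_mul_X_pow_eq_monomial]

theorem orderedEval_injective : Function.Injective (orderedEval k) :=
  Function.LeftInverse.injective (g := fun a => polyRep k a 1) polyRep_orderedEval_one

theorem exists_Wq_mul_sub_mul_Wq_eq [Algebra ℚ k] (u : Weyl k) :
    ∃ x, Wq k * x - x * Wq k = u := by
  obtain ⟨f, rfl⟩ := orderedEval_surjective u
  obtain ⟨F, rfl⟩ := derivative_surjective_of_algebra_rat f
  exact ⟨orderedEval k F, Wq_mul_orderedEval_sub F⟩

theorem exists_aeval_Wq_eq_of_commute [IsDomain k] [CharZero k] {v : Weyl k}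
    (hv : Commute (Wq k) v) : ∃ g : k[X], aeval (Wq k) g = v := by
  obtain ⟨f, rfl⟩ := orderedEval_surjective v
  have hf : derivative f = 0 := orderedEval_injective <| by
    rw [← Wq_mul_orderedEval_sub, hv.eq, sub_self, map_zero]
  exact ⟨f.coeff 0, by rw [← orderedEval_C, ← eq_C_of_derivative_eq_zero hf]⟩

theorem commute_Wq_apply_Wp_sub (D : Weyl k →ₗ[k] Weyl k)
    (hD : ∀ a b, D (a * b) = D a * b + a * D b) {x : Weyl k} (hq : D (Wq k) = x * Wq k - Wq k * x) :
    Commute (Wq k) (D (Wp k) - (x * Wp k - Wp k * x)) := by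
  have h := hD (Wq k) (Wp k)
  rw [Wq_mul_Wp, map_add, hD, apply_one_eq_zero_of_leibniz hD, add_zero, hq] at h
  have hrel := Wq_mul_Wp_sub_Wp_mul_Wq (k := k)
  unfold Commute SemiconjBy
  linear_combination (norm := skip) hrel * x - x * hrel - h
  simp only [mul_sub, sub_mul, mul_assoc, one_mul, mul_one]
  abel

theorem apply_eq_mul_sub_mul_of_leibniz (D : Weyl k →ₗ[k] Weyl k)
    (hD : ∀ a b, D (a * b) = D a * b + a * D b) {x : Weyl k} (hq : D (Wq k) = x * Wq k - Wq k * x)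
    (hp : D (Wp k) = x * Wp k - Wp k * x) (a : Weyl k) : D a = x * a - a * x := by
  induction a using Weyl.induction_on with
  | algebraMap c =>
    rw [Algebra.algebraMap_eq_smul_one, map_smul, apply_one_eq_zero_of_leibniz hD, smul_zero,
      mul_smul_comm, smul_mul_assoc, mul_one, one_mul, sub_self]
  | Wq => exact hq
  | Wp => exact hp
  | add a b ha hb => rw [map_add, ha, hb]; noncomm_ring
  | mul a b ha hb =>
    rw [hD, ha, hb]
    simp only [mul_sub, sub_mul, mul_assoc]
    abel

end Weyl

theorem weyl_derivation_inner (k : Type*) [Field k] [CharZero k]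
    (D : Weyl k →ₗ[k] Weyl k)
    (hLeibniz : ∀ a b : Weyl k, D (a * b) = D a * b + a * D b) :
    ∃ x : Weyl k, ∀ a : Weyl k, D a = x * a - a * x := by
  obtain ⟨x₀, hx₀⟩ := Weyl.exists_Wq_mul_sub_mul_Wq_eq (-D (Wq k))
  have hq : D (Wq k) = x₀ * Wq k - Wq k * x₀ := by rw [← neg_sub, hx₀, neg_neg]
  obtain ⟨g, hg⟩ :=
    Weyl.exists_aeval_Wq_eq_of_commute (Weyl.commute_Wq_apply_Wp_sub D hLeibniz hq)
  obtain ⟨G, rfl⟩ := derivative_surjective_of_algebra_rat g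
  refine ⟨x₀ + aeval (Wq k) G, Weyl.apply_eq_mul_sub_mul_of_leibniz D hLeibniz ?_ ?_⟩
  · rw [hq, add_mul, mul_add, (commute_aeval_self (Wq k) G).eq]
    abel
  · rw [add_mul, mul_add, add_sub_add_comm,
      aeval_mul_sub_mul_aeval Weyl.Wq_mul_Wp_sub_Wp_mul_Wq, hg]
    abel
end

section
/- The linear functional Tr on 𝒜 = A₁ ⋊ ℤ₂ defined by Tr(f₁(y) + f₂(y)κ) = f₂(0) is a trace: Tr(a ⋆ b) = Tr(b ⋆ a) for all a, b ∈ 𝒜. -/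
/- STATEMENT 12: The linear functional Tr on 𝒜 = A₁ ⋊ ℤ₂ defined by
Tr(f₁(y) + f₂(y)κ) = f₂(0) is a trace: Tr(a ⋆ b) = Tr(b ⋆ a).
Elements of 𝒜 are represented as pairs (f₁, f₂) = f₁ + f₂ κ of Weyl–Moyal
polynomials; the Klein operator κ satisfies κ² = 1, κ f(y) κ = f(−y), which
gives the multiplication rule
  (a + bκ)(c + dκ) = (a⋆c + b⋆π(d)) + (a⋆d + b⋆π(c))κ,  π(f)(y) = f(−y). -/

open MvPolynomial

noncomputable section

/-- the automorphism `π (f)(y) = f(-y)`. -/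
def piNeg (f : P2) : P2 := aeval (fun i : Fin 2 => - (X i : P2)) f

/-- multiplication on `𝒜 = A₁ ⋊ ℤ₂`, elements written as pairs `f₁ + f₂ κ`. -/
def smashMul (x y : P2 × P2) : P2 × P2 :=
  (moyalStar x.1 y.1 + moyalStar x.2 (piNeg y.2),
   moyalStar x.1 y.2 + moyalStar x.2 (piNeg y.1))

/-- `Tr (f₁ + f₂ κ) = f₂(0)`. -/
def TrSmash (x : P2 × P2) : ℂ := constantCoeff x.2

/-! Only the κ-components contribute to `Tr`: `Tr (x ⋆ y) = (x₁ ⋆ y₂)(0) + (x₂ ⋆ π y₁)(0)`,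
so it suffices that `(f ⋆ g)(0) = (g ⋆ π f)(0)`. On the doubled variables the substitution
`(y₁, y₂) ↦ (−y₂, y₁)` sends `f(y₁) g(y₂)` to `g(y₁) (π f)(y₂)`; it preserves the symplectic
pairing, hence commutes with the Moyal bidifferential operator, and it fixes constant terms.
As `π` preserves total degree, both star products are truncated at the same order. -/

namespace MvPolynomial

variable {R σ : Type*} [CommSemiring R]

theorem pderiv_pderiv_comm (i j : σ) (p : MvPolynomial σ R) :
    pderiv i (pderiv j p) = pderiv j (pderiv i p) := by
  classical
  induction p using MvPolynomial.induction_on with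
  | C a => simp
  | add p q hp hq => simp [hp, hq]
  | mul_X p k hp =>
    simp only [Derivation.leibniz, map_add, pderiv_X, hp, smul_eq_mul, Pi.single_apply]
    split_ifs <;> simp <;> ring

theorem pderiv_aeval [Fintype σ] (i : σ) (g : σ → MvPolynomial σ R) (p : MvPolynomial σ R) :
    pderiv i (aeval g p) = ∑ j, pderiv i (g j) * aeval g (pderiv j p) := by
  classical
  induction p using MvPolynomial.induction_on with
  | C a => simp
  | add p q hp hq => simp only [map_add, hp, hq, mul_add, Finset.sum_add_distrib]
  | mul_X p k hp =>
    simp only [map_mul, aeval_X, Derivation.leibniz, smul_eq_mul, hp, pderiv_X, map_add,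
      mul_add, Finset.sum_add_distrib, Finset.mul_sum, Pi.single_apply, mul_ite, mul_one,
      mul_zero, apply_ite (aeval g), map_zero, Finset.sum_ite_eq, Finset.mem_univ, if_true,
      mul_left_comm (g k)]
    ring

theorem constantCoeff_aeval_of_constantCoeff_eq_zero {g : σ → MvPolynomial σ R}
    (hg : ∀ i, constantCoeff (g i) = 0) (p : MvPolynomial σ R) :
    constantCoeff (aeval g p) = constantCoeff p := by
  have : (fun i => constantCoeff (g i) : σ → R) = fun _ => 0 := _root_.funext hg
  rw [map_aeval, constantCoeff_comp_algebraMap, this, eval₂Hom_zero'_apply, RingHom.id_apply]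

end MvPolynomial

def quarterTurn : P4 →ₐ[ℂ] P4 := aeval ![-X 2, -X 3, X 0, X 1]

theorem moyalOp_quarterTurn (p : P4) : moyalOp (quarterTurn p) = quarterTurn (moyalOp p) := by
  have hpderiv (i : Fin 4) (q : P4) : pderiv i (quarterTurn q) =
      ∑ j, pderiv i (![-X 2, -X 3, X 0, X 1] j : P4) * quarterTurn (pderiv j q) :=
    pderiv_aeval i _ q
  simp [moyalOp, hpderiv, Fin.sum_univ_four, pderiv_X, pderiv_pderiv_comm (1 : Fin 4) 2,
    pderiv_pderiv_comm (0 : Fin 4) 3]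
  ring

theorem moyalOp_pow_quarterTurn (n : ℕ) (p : P4) :
    (moyalOp ^ n) (quarterTurn p) = quarterTurn ((moyalOp ^ n) p) :=
  LinearMap.congr_fun (Module.End.commute_pow_left_of_commute
    (LinearMap.ext moyalOp_quarterTurn :
      moyalOp ∘ₗ quarterTurn.toLinearMap = quarterTurn.toLinearMap ∘ₗ moyalOp) n) p

theorem constantCoeff_quarterTurn (p : P4) : constantCoeff (quarterTurn p) = constantCoeff p :=
  constantCoeff_aeval_of_constantCoeff_eq_zero (fun i => by fin_cases i <;> simp) p

theorem quarterTurn_rename_mul_rename (f g : P2) :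
    quarterTurn (rename emb1 f * rename emb2 g) = rename emb1 g * rename emb2 (piNeg f) := by
  have h1 : quarterTurn (rename emb1 f) = rename emb2 (piNeg f) := by
    rw [quarterTurn, aeval_rename, piNeg, ← AlgHom.comp_apply, comp_aeval]
    congr 2
    funext i
    fin_cases i <;> simp [emb1, emb2]
  have h2 : quarterTurn (rename emb2 g) = rename emb1 g := by
    rw [quarterTurn, aeval_rename, ← aeval_X_left_apply (rename emb1 g), aeval_rename]
    congr 2
    funext i
    fin_cases i <;> simp [emb1, emb2]
  rw [map_mul, h1, h2, mul_comm]

theorem piNeg_monomial (d : Fin 2 →₀ ℕ) (c : ℂ) :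
    piNeg (monomial d c) = monomial d ((-1) ^ d.degree * c) := by
  rw [piNeg, aeval_monomial, monomial_eq, Finsupp.degree_apply, map_mul, map_pow, map_neg,
    map_one, algebraMap_eq, Finsupp.prod, Finsupp.prod, ← Finset.prod_pow_eq_pow_sum,
    mul_right_comm, ← Finset.prod_mul_distrib, mul_comm]
  simp_rw [neg_pow (X _ : P2)]

theorem coeff_piNeg (m : Fin 2 →₀ ℕ) (f : P2) :
    coeff m (piNeg f) = (-1) ^ m.degree * coeff m f := by
  induction f using MvPolynomial.induction_on' with
  | monomial d c =>
    rw [piNeg_monomial, coeff_monomial, coeff_monomial]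
    split_ifs with h <;> simp [h]
  | add p q hp hq => rw [piNeg, map_add, ← piNeg, ← piNeg, coeff_add, coeff_add, hp, hq, mul_add]

theorem totalDegree_piNeg (f : P2) : (piNeg f).totalDegree = f.totalDegree := by
  have : (piNeg f).support = f.support := by
    ext m
    simp [coeff_piNeg]
  rw [totalDegree, totalDegree, this]

theorem constantCoeff_moyalStar_eq_moyalStar_piNeg (f g : P2) :
    constantCoeff (moyalStar f g) = constantCoeff (moyalStar g (piNeg f)) := by
  rw [moyalStar, moyalStar, totalDegree_piNeg, add_comm g.totalDegree, map_sum, map_sum]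
  refine Finset.sum_congr rfl fun n _ => ?_
  rw [constantCoeff_smul, constantCoeff_smul, constantCoeff_rename, constantCoeff_rename,
    ← quarterTurn_rename_mul_rename, moyalOp_pow_quarterTurn, constantCoeff_quarterTurn]

/-- `Tr` is a trace on `𝒜`. -/
theorem TrSmash_is_trace (x y : P2 × P2) :
    TrSmash (smashMul x y) = TrSmash (smashMul y x) := by
  simp only [TrSmash, smashMul, map_add]
  rw [constantCoeff_moyalStar_eq_moyalStar_piNeg x.1 y.2,
    constantCoeff_moyalStar_eq_moyalStar_piNeg y.1 x.2, add_comm]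

end
end

section
/- Given a cyclic 2-cocycle φ_C on an algebra A (i.e., φ_C(a,b,c) = φ_C(c,a,b) and φ_C(ab,c,d) − φ_C(a,bc,d) + φ_C(a,b,cd) − φ_C(da,b,c) = 0) and 1-forms ω with values in A on a manifold satisfying dω = ω ⋆ ω (where ⋆ combines wedge product with the algebra product), the 3-form J = φ_C(ω, ω, ω) is closed: dJ = 0. -/
/- STATEMENT 15: Given a cyclic 2-cocycle φ_C on a unital associative ℂ-algebra
A (φ_C(a,b,c) = φ_C(c,a,b) and φ_C(ab,c,d) − φ_C(a,bc,d) + φ_C(a,b,cd)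
− φ_C(da,b,c) = 0) and an A-valued 1-form ω satisfying dω = ω ⋆ ω, the 3-form
J = φ_C(ω,ω,ω) is closed: dJ = 0.

We work with formal/algebraic differential forms: A-valued polynomial
coefficient functions are elements of AddMonoidAlgebra A (Fin n →₀ ℕ) (i.e.
polynomials in n coordinates with coefficients in A); a 1-form is a family of
components w μ, and equality of p-forms is equality of totally antisymmetrized
components.  Flatness reads ∂_μ w_ν − ∂_ν w_μ = w_μ w_ν − w_ν w_μ, the 3-form
J has components φ_C(w_μ, w_ν, w_ρ) (extended coefficientwise to scalar-valued
polynomials), and dJ = 0 says the total antisymmetrization of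
∂_{μ₀} J_{μ₁μ₂μ₃} vanishes. -/

open scoped BigOperators

variable {A : Type*} [Ring A] [Algebra ℂ A]

/-- polynomial functions in `n` coordinates with coefficients in `R`. -/
abbrev PForm (R : Type*) [Ring R] (n : ℕ) := AddMonoidAlgebra R (Fin n →₀ ℕ)

/-- the partial derivative `∂_μ` on coefficient functions. -/
noncomputable def pd {R : Type*} [Ring R] (n : ℕ) (μ : Fin n) (x : PForm R n) :
    PForm R n :=
  AddMonoidAlgebra.ofCoeff (Finsupp.sum x.coeff fun m a =>
    Finsupp.single (m - Finsupp.single μ 1) ((m μ) • a))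

/-- the coefficientwise extension of a trilinear functional on `A` to
`A`-valued polynomial functions, with values in scalar polynomial functions. -/
noncomputable def triExt (n : ℕ) (φ : A →ₗ[ℂ] A →ₗ[ℂ] A →ₗ[ℂ] ℂ)
    (x y z : PForm A n) : PForm ℂ n :=
  AddMonoidAlgebra.ofCoeff (Finsupp.sum x.coeff fun m1 a => Finsupp.sum y.coeff fun m2 b =>
    Finsupp.sum z.coeff fun m3 c => Finsupp.single (m1 + m2 + m3) (φ a b c))

/-! Expanding `∂_{μ₀} φ(ω_{μ₁}, ω_{μ₂}, ω_{μ₃})` by the Leibniz rule gives three terms which,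
after antisymmetrization, cyclicity of `φ` makes equal: `dJ` is three times the antisymmetrization
of `φ(∂_{μ₀} ω_{μ₁}, ω_{μ₂}, ω_{μ₃})`, and flatness replaces `∂_{μ₀} ω_{μ₁}` there by
`ω_{μ₀} ω_{μ₁}`. Cyclicity also turns the four terms of the cocycle identity at
`(ω_{μ₀}, ω_{μ₁}, ω_{μ₂}, ω_{μ₃})` into `φ(ω_{μ₀} ω_{μ₁}, ω_{μ₂}, ω_{μ₃})` at the four cyclic
rotations of the indices, with alternating signs; since the 4-cycle is odd, the four
contributions to the antisymmetrization add up, so that of `φ(ω_{μ₀} ω_{μ₁}, ω_{μ₂}, ω_{μ₃})`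
vanishes. -/

open AddMonoidAlgebra

section Monomials

variable {σ R : Type*} [Semiring R] (μ : σ)

lemma single_tsub_add (m k : σ →₀ ℕ) (q : R) :
    single (m - Finsupp.single μ 1 + k) (m μ • q)
      = single (m + k - Finsupp.single μ 1) (m μ • q) := by
  rcases Nat.eq_zero_or_pos (m μ) with h | h
  · simp [h]
  · rw [tsub_add_eq_add_tsub (Finsupp.single_le_iff.2 h)]

lemma single_add_add_tsub (m₁ m₂ m₃ : σ →₀ ℕ) (q : R) :
    single (m₁ + m₂ + m₃ - Finsupp.single μ 1) ((m₁ + m₂ + m₃) μ • q)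
      = single (m₁ - Finsupp.single μ 1 + m₂ + m₃) (m₁ μ • q)
        + single (m₁ + (m₂ - Finsupp.single μ 1) + m₃) (m₂ μ • q)
        + single (m₁ + m₂ + (m₃ - Finsupp.single μ 1)) (m₃ μ • q) := by
  set e := Finsupp.single μ 1
  simp only [Finsupp.add_apply, add_smul, single_add]
  congr 1
  congr 1
  · rw [add_assoc (m₁ - e), single_tsub_add, ← add_assoc]
  · rw [show m₁ + (m₂ - e) + m₃ = m₂ - e + (m₁ + m₃) by ac_rfl, single_tsub_add,
      show m₂ + (m₁ + m₃) = m₁ + m₂ + m₃ by ac_rfl]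
  · rw [show m₁ + m₂ + (m₃ - e) = m₃ - e + (m₁ + m₂) by ac_rfl, single_tsub_add,
      show m₃ + (m₁ + m₂) = m₁ + m₂ + m₃ by ac_rfl]

end Monomials

section Derivative

variable {R : Type*} [Ring R] {n : ℕ} (μ : Fin n)

@[simp]
lemma pd_single (m : Fin n →₀ ℕ) (a : R) :
    pd n μ (single m a) = single (m - Finsupp.single μ 1) (m μ • a) := by
  rw [pd, coeff_single, Finsupp.sum_single_index (by simp), ofCoeff_single]

@[simp]
lemma pd_zero : pd n μ (0 : PForm R n) = 0 := by
  simp [pd]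

lemma pd_add (x y : PForm R n) : pd n μ (x + y) = pd n μ x + pd n μ y := by
  simp only [pd, coeff_add, ← ofCoeff_add]
  congr 1
  exact Finsupp.sum_add_index' (by simp) fun m a b => by rw [smul_add, Finsupp.single_add]

end Derivative

section Trilinear

variable {n : ℕ} (φ : A →ₗ[ℂ] A →ₗ[ℂ] A →ₗ[ℂ] ℂ)

@[simp]
lemma triExt_single (m₁ m₂ m₃ : Fin n →₀ ℕ) (a b c : A) :
    triExt n φ (single m₁ a) (single m₂ b) (single m₃ c) = single (m₁ + m₂ + m₃) (φ a b c) := by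
  simp only [triExt, coeff_single]
  rw [Finsupp.sum_single_index (by simp), Finsupp.sum_single_index (by simp),
    Finsupp.sum_single_index (by simp), ofCoeff_single]

@[simp]
lemma triExt_zero_left (y z : PForm A n) : triExt n φ 0 y z = 0 := by
  simp [triExt]

@[simp]
lemma triExt_zero_mid (x z : PForm A n) : triExt n φ x 0 z = 0 := by
  simp [triExt]

@[simp]
lemma triExt_zero_right (x y : PForm A n) : triExt n φ x y 0 = 0 := by
  simp [triExt]

lemma triExt_add_left (x x' y z : PForm A n) :
    triExt n φ (x + x') y z = triExt n φ x y z + triExt n φ x' y z := by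
  simp only [triExt, coeff_add, ← ofCoeff_add]
  congr 1
  refine Finsupp.sum_add_index' (by simp) fun m a a' => ?_
  simp only [map_add, LinearMap.add_apply, Finsupp.single_add, Finsupp.sum_add]

lemma triExt_add_mid (x y y' z : PForm A n) :
    triExt n φ x (y + y') z = triExt n φ x y z + triExt n φ x y' z := by
  simp only [triExt, coeff_add, ← ofCoeff_add, ← Finsupp.sum_add]
  congr 1
  refine Finsupp.sum_congr fun m _ => Finsupp.sum_add_index' (by simp) fun m b b' => ?_
  simp only [map_add, LinearMap.add_apply, Finsupp.single_add, Finsupp.sum_add]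

lemma triExt_add_right (x y z z' : PForm A n) :
    triExt n φ x y (z + z') = triExt n φ x y z + triExt n φ x y z' := by
  simp only [triExt, coeff_add, ← ofCoeff_add, ← Finsupp.sum_add]
  congr 1
  refine Finsupp.sum_congr fun m _ => Finsupp.sum_congr fun m _ =>
    Finsupp.sum_add_index' (by simp) fun m c c' => ?_
  simp only [map_add, Finsupp.single_add]

lemma triExt_sub_left (x x' y z : PForm A n) :
    triExt n φ (x - x') y z = triExt n φ x y z - triExt n φ x' y z := by
  rw [eq_sub_iff_add_eq, ← triExt_add_left, sub_add_cancel]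

end Trilinear

section Identities

variable {n : ℕ} (φ : A →ₗ[ℂ] A →ₗ[ℂ] A →ₗ[ℂ] ℂ)

lemma pd_triExt (μ : Fin n) (x y z : PForm A n) :
    pd n μ (triExt n φ x y z)
      = triExt n φ (pd n μ x) y z + triExt n φ x (pd n μ y) z + triExt n φ x y (pd n μ z) := by
  induction x using induction_linear with
  | zero => simp
  | add x x' hx hx' => simp only [triExt_add_left, pd_add, hx, hx']; abel
  | single m₁ a =>
  induction y using induction_linear with
  | zero => simp
  | add y y' hy hy' => simp only [triExt_add_mid, pd_add, hy, hy']; abel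
  | single m₂ b =>
  induction z using induction_linear with
  | zero => simp
  | add z z' hz hz' => simp only [triExt_add_right, pd_add, hz, hz']; abel
  | single m₃ c =>
  simp only [triExt_single, pd_single, map_nsmul, LinearMap.smul_apply, single_add_add_tsub]

lemma triExt_cyclic (hcyc : ∀ a b c : A, φ a b c = φ c a b) (x y z : PForm A n) :
    triExt n φ x y z = triExt n φ z x y := by
  induction x using induction_linear with
  | zero => simp
  | add x x' hx hx' => rw [triExt_add_left, triExt_add_mid, hx, hx']
  | single m₁ a =>
  induction y using induction_linear with
  | zero => simp
  | add y y' hy hy' => rw [triExt_add_mid, triExt_add_right, hy, hy']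
  | single m₂ b =>
  induction z using induction_linear with
  | zero => simp
  | add z z' hz hz' => rw [triExt_add_right, triExt_add_left, hz, hz']
  | single m₃ c => rw [triExt_single, triExt_single, hcyc, add_comm (m₁ + m₂), add_assoc]

lemma triExt_cocycle
    (hcocycle : ∀ a b c d : A,
      φ (a * b) c d - φ a (b * c) d + φ a b (c * d) - φ (d * a) b c = 0)
    (x y z u : PForm A n) :
    triExt n φ (x * y) z u - triExt n φ x (y * z) u + triExt n φ x y (z * u)
      - triExt n φ (u * x) y z = 0 := by
  induction x using induction_linear with
  | zero => simp
  | add x x' hx hx' =>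
    simp only [add_mul, mul_add, triExt_add_left]
    linear_combination hx + hx'
  | single m₁ a =>
  induction y using induction_linear with
  | zero => simp
  | add y y' hy hy' =>
    simp only [add_mul, mul_add, triExt_add_left, triExt_add_mid]
    linear_combination hy + hy'
  | single m₂ b =>
  induction z using induction_linear with
  | zero => simp
  | add z z' hz hz' =>
    simp only [add_mul, mul_add, triExt_add_mid, triExt_add_right]
    linear_combination hz + hz'
  | single m₃ c =>
  induction u using induction_linear with
  | zero => simp
  | add u u' hu hu' =>
    simp only [add_mul, mul_add, triExt_add_left, triExt_add_right]
    linear_combination hu + hu'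
  | single m₄ d =>
  simp only [single_mul_single, triExt_single]
  rw [show m₄ + m₁ + m₂ + m₃ = m₁ + m₂ + m₃ + m₄ by ac_rfl, ← add_assoc m₁, ← add_assoc,
    ← single_sub, ← single_add, ← single_sub, hcocycle, single_zero]

end Identities

section Antisymmetrization

open Equiv Equiv.Perm

variable {κ ι M : Type*} [Fintype κ] [DecidableEq κ] [AddCommGroup M]

def antisymmetrize : ((κ → ι) → M) →+ ((κ → ι) → M) where
  toFun f v := ∑ σ : Perm κ, (sign σ : ℤ) • f (v ∘ σ)
  map_zero' := by ext; simp
  map_add' f g := by ext; simp [Finset.sum_add_distrib]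

lemma antisymmetrize_apply (f : (κ → ι) → M) (v : κ → ι) :
    antisymmetrize f v = ∑ σ : Perm κ, (sign σ : ℤ) • f (v ∘ σ) := rfl

lemma antisymmetrize_comp_perm (f : (κ → ι) → M) (π : Perm κ) :
    antisymmetrize (fun u => f (u ∘ π)) = (sign π : ℤ) • antisymmetrize f := by
  ext v
  rw [Pi.smul_apply, antisymmetrize_apply, antisymmetrize_apply, Finset.smul_sum]
  conv_rhs => rw [← Equiv.sum_comp (Equiv.mulRight π)]
  refine Finset.sum_congr rfl fun σ _ => ?_
  simp only [coe_mulRight, Perm.sign_mul, coe_mul, smul_smul, Function.comp_assoc]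
  rw [← Units.val_mul, mul_left_comm, Int.units_mul_self, mul_one]

end Antisymmetrization

section FlatConnection

open Equiv Equiv.Perm

variable {n : ℕ} (φ : A →ₗ[ℂ] A →ₗ[ℂ] A →ₗ[ℂ] ℂ)

lemma antisymmetrize_pd_triExt (hcyc : ∀ a b c : A, φ a b c = φ c a b) (w : Fin n → PForm A n) :
    antisymmetrize (fun u : Fin 4 → Fin n => pd n (u 0) (triExt n φ (w (u 1)) (w (u 2)) (w (u 3))))
      = 3 • antisymmetrize
          (fun u : Fin 4 → Fin n => triExt n φ (pd n (u 0) (w (u 1))) (w (u 2)) (w (u 3))) := by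
  set L := fun u : Fin 4 → Fin n => triExt n φ (pd n (u 0) (w (u 1))) (w (u 2)) (w (u 3))
  -- the 3-cycle `1 ↦ 2 ↦ 3 ↦ 1`
  set c : Perm (Fin 4) := swap 1 2 * swap 2 3
  have hsplit : (fun u : Fin 4 → Fin n => pd n (u 0) (triExt n φ (w (u 1)) (w (u 2)) (w (u 3))))
      = L + (fun u => L (u ∘ c)) + (fun u => L (u ∘ ⇑(c ^ 2))) := by
    funext u
    rw [pd_triExt, ← triExt_cyclic φ hcyc (pd n (u 0) (w (u 2))),
      triExt_cyclic φ hcyc (w (u 1)) (w (u 2))]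
    rfl
  have hc : sign c = 1 := by decide
  rw [hsplit, map_add, map_add, antisymmetrize_comp_perm, antisymmetrize_comp_perm, map_pow, hc]
  simp only [one_pow, Units.val_one, one_smul]
  abel

lemma antisymmetrize_triExt_pd_of_flat (w : Fin n → PForm A n)
    (hflat : ∀ μ ν : Fin n, pd n μ (w ν) - pd n ν (w μ) = w μ * w ν - w ν * w μ) :
    antisymmetrize (fun u : Fin 4 → Fin n => triExt n φ (pd n (u 0) (w (u 1))) (w (u 2)) (w (u 3)))
      = antisymmetrize
          (fun u : Fin 4 → Fin n => triExt n φ (w (u 0) * w (u 1)) (w (u 2)) (w (u 3))) := by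
  set L := fun u : Fin 4 → Fin n => triExt n φ (pd n (u 0) (w (u 1))) (w (u 2)) (w (u 3))
  set Q := fun u : Fin 4 → Fin n => triExt n φ (w (u 0) * w (u 1)) (w (u 2)) (w (u 3))
  set τ : Perm (Fin 4) := swap 0 1
  have hτ : sign τ = -1 := sign_swap (by decide)
  have hswap : L - (fun u => L (u ∘ τ)) = Q - (fun u => Q (u ∘ τ)) := by
    funext u
    change triExt n φ _ _ _ - triExt n φ (pd n (u 1) (w (u 0))) (w (u 2)) (w (u 3))
      = triExt n φ _ _ _ - triExt n φ (w (u 1) * w (u 0)) (w (u 2)) (w (u 3))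
    rw [← triExt_sub_left, ← triExt_sub_left, hflat]
  have h2 : 2 • antisymmetrize L = 2 • antisymmetrize Q := by
    have h := congrArg antisymmetrize hswap
    simpa only [map_sub, antisymmetrize_comp_perm, hτ, Units.val_neg, Units.val_one, neg_smul,
      one_smul, sub_neg_eq_add, ← two_nsmul] using h
  exact nsmul_right_injective two_ne_zero h2

lemma antisymmetrize_triExt_mul (hcyc : ∀ a b c : A, φ a b c = φ c a b)
    (hcocycle : ∀ a b c d : A,
      φ (a * b) c d - φ a (b * c) d + φ a b (c * d) - φ (d * a) b c = 0)
    {ι : Type*} (w : ι → PForm A n) :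
    antisymmetrize (fun u : Fin 4 → ι => triExt n φ (w (u 0) * w (u 1)) (w (u 2)) (w (u 3)))
      = 0 := by
  set Q := fun u : Fin 4 → ι => triExt n φ (w (u 0) * w (u 1)) (w (u 2)) (w (u 3))
  set ρ : Perm (Fin 4) := finRotate 4
  have hρ : sign ρ = -1 := by decide
  have hρ2 : sign (ρ ^ 2) = 1 := by decide
  have hρ3 : sign (ρ ^ 3) = -1 := by decide
  have hrotate : Q - (fun u => Q (u ∘ ρ)) + (fun u => Q (u ∘ ⇑(ρ ^ 2)))
      - (fun u => Q (u ∘ ⇑(ρ ^ 3))) = 0 := by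
    funext u
    have h := triExt_cocycle φ hcocycle (w (u 0)) (w (u 1)) (w (u 2)) (w (u 3))
    rw [← triExt_cyclic φ hcyc (w (u 1) * w (u 2)), triExt_cyclic φ hcyc (w (u 0)) (w (u 1))] at h
    exact h
  have h4 : 4 • antisymmetrize Q = 4 • 0 := by
    have h := congrArg antisymmetrize hrotate
    simp only [map_sub, map_add, map_zero, antisymmetrize_comp_perm, hρ, hρ2, hρ3, Units.val_neg,
      Units.val_one, neg_smul, one_smul, sub_neg_eq_add] at h
    rw [smul_zero, ← h]
    abel
  exact nsmul_right_injective four_ne_zero h4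

end FlatConnection

/-- For a flat connection `ω`, the 3-form `J = φ_C(ω,ω,ω)` built from a cyclic
2-cocycle `φ_C` is closed. -/
theorem cyclic_cocycle_threeform_closed (n : ℕ)
    (φ : A →ₗ[ℂ] A →ₗ[ℂ] A →ₗ[ℂ] ℂ)
    (hcyc : ∀ a b c : A, φ a b c = φ c a b)
    (hcocycle : ∀ a b c d : A,
      φ (a * b) c d - φ a (b * c) d + φ a b (c * d) - φ (d * a) b c = 0)
    (w : Fin n → PForm A n)
    (hflat : ∀ μ ν : Fin n,
      pd n μ (w ν) - pd n ν (w μ) = w μ * w ν - w ν * w μ)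
    (v : Fin 4 → Fin n) :
    ∑ σ : Equiv.Perm (Fin 4), ((Equiv.Perm.sign σ : ℤˣ) : ℤ) •
      pd n (v (σ 0)) (triExt n φ (w (v (σ 1))) (w (v (σ 2))) (w (v (σ 3)))) = 0 := by
  have h := antisymmetrize_pd_triExt φ hcyc w
  rw [antisymmetrize_triExt_pd_of_flat φ w hflat, antisymmetrize_triExt_mul φ hcyc hcocycle w,
    smul_zero] at h
  exact congrFun h v
end

section
/- Let A = B ⊗ C be a tensor product of unital associative k-algebras, M a B-bimodule and N a C-bimodule, with the induced A-bimodule structure on M ⊗ N. For Hochschild cochains f ∈ C^q(B,M) and g ∈ C^p(C,N), the cup product (f ⊔ g)(b₁⊗c₁,…,b_{q+p}⊗c_{q+p}) = ± f(b₁,…,b_q)·b_{q+1}⋯b_{q+p} ⊗ c₁⋯c_q·g(c_{q+1},…,c_{q+p}) (defined on elementary tensors, with the Koszul sign in the ungraded case being (−1)^0 = 1) satisfies the Leibniz rule ∂(f ⊔ g) = ∂f ⊔ g + (−1)^q f ⊔ ∂g, and hence induces a product HH^q(B,M) ⊗ HH^p(C,N) → HH^{q+p}(B⊗C, M⊗N).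 -/
/- STATEMENT 17: For algebras B, C over a field k, a B-bimodule M and a
C-bimodule N (bimodules encoded by compatible left actions of B, Bᵐᵒᵖ, etc.),
the cup product of Hochschild cochains,
  (f ⊔ g)(b₁⊗c₁,…,b_{q+p}⊗c_{q+p})
    = f(b₁,…,b_q)·b_{q+1}⋯b_{q+p} ⊗ c₁⋯c_q·g(c_{q+1},…,c_{q+p}),
satisfies the Leibniz rule ∂(f ⊔ g) = ∂f ⊔ g + (−1)^q f ⊔ ∂g, hence induces a
product HH^q(B,M) ⊗ HH^p(C,N) → HH^{q+p}(B⊗C, M⊗N).  Since multilinear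
cochains on B ⊗ C with values in M ⊗ N are determined by their values on
elementary tensors, and products and bimodule actions of elementary tensors on
elementary tensors stay elementary, the Leibniz identity is faithfully
expressed entirely on elementary-tensor arguments (i.e. on pairs of tuples
(b, c)); the Hochschild differential of the algebra B ⊗ C, restricted to
elementary tensors, appears below as `hochDT`. -/

open scoped BigOperators TensorProduct

variable {k B C M N : Type*} [Field k]
  [Ring B] [Algebra k B] [Ring C] [Algebra k C]
  [AddCommGroup M] [Module k M] [Module B M] [Module Bᵐᵒᵖ M]
  [SMulCommClass B k M] [SMulCommClass Bᵐᵒᵖ k M] [SMulCommClass B Bᵐᵒᵖ M]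
  [AddCommGroup N] [Module k N] [Module C N] [Module Cᵐᵒᵖ N]
  [SMulCommClass C k N] [SMulCommClass Cᵐᵒᵖ k N] [SMulCommClass C Cᵐᵒᵖ N]

/-- the `j`-th "merge" of a tuple. -/
def contractArg {D : Type*} [Mul D] (p : ℕ) (a : Fin (p + 1) → D) (j : Fin p) :
    Fin p → D :=
  fun i => if i = j then a i.castSucc * a i.succ
    else if (i : ℕ) < (j : ℕ) then a i.castSucc else a i.succ

variable (k) in
/-- scalar multiplication by `r` as a `k`-linear endomorphism. -/
def lmulG {R V : Type*} [Monoid R] [AddCommMonoid V] [Module k V]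
    [DistribMulAction R V] [SMulCommClass R k V] (r : R) : V →ₗ[k] V where
  toFun v := r • v
  map_add' := smul_add r
  map_smul' c v := smul_comm r c v

/-- the Hochschild coboundary for an algebra `D` with bimodule `V`. -/
def hochD {D V : Type*} [Ring D] [AddCommGroup V] [Module D V] [Module Dᵐᵒᵖ V]
    (q : ℕ) (f : (Fin q → D) → V) : (Fin (q + 1) → D) → V := fun a =>
  a 0 • f (Fin.tail a)
    + ∑ j : Fin q, (-1 : ℤ) ^ ((j : ℕ) + 1) • f (contractArg q a j)
    + (-1 : ℤ) ^ (q + 1) • (MulOpposite.op (a (Fin.last q)) • f (Fin.init a))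

/-- the cup product `f ⊔ g` evaluated on a tuple of elementary tensors
`(bᵢ ⊗ cᵢ)`; `r = q + p` is the total arity. -/
noncomputable def cupFun (q p r : ℕ) (hr : r = q + p)
    (f : (Fin q → B) → M) (g : (Fin p → C) → N)
    (b : Fin r → B) (c : Fin r → C) : M ⊗[k] N :=
  (MulOpposite.op
      ((List.ofFn fun i : Fin p =>
        b ⟨q + (i : ℕ), by have := i.isLt; omega⟩).prod)
    • f fun i : Fin q => b ⟨(i : ℕ), by have := i.isLt; omega⟩)
  ⊗ₜ[k]
  (((List.ofFn fun i : Fin q =>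
        c ⟨(i : ℕ), by have := i.isLt; omega⟩).prod)
    • g fun i : Fin p => c ⟨q + (i : ℕ), by have := i.isLt; omega⟩)

/-- the Hochschild coboundary for `(B ⊗ C, M ⊗ N)`, restricted to
elementary-tensor arguments. -/
noncomputable def hochDT (r : ℕ)
    (h : (Fin r → B) → (Fin r → C) → M ⊗[k] N) :
    (Fin (r + 1) → B) → (Fin (r + 1) → C) → M ⊗[k] N := fun b c =>
  TensorProduct.map (lmulG k (b 0)) (lmulG k (c 0))
      (h (Fin.tail b) (Fin.tail c))
    + ∑ j : Fin r, (-1 : ℤ) ^ ((j : ℕ) + 1) •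
        h (contractArg r b j) (contractArg r c j)
    + (-1 : ℤ) ^ (r + 1) •
        TensorProduct.map (lmulG k (MulOpposite.op (b (Fin.last r))))
          (lmulG k (MulOpposite.op (c (Fin.last r))))
          (h (Fin.init b) (Fin.init c))

/- The Hochschild differential is the alternating sum of its faces: multiplication by the first
argument, the `q` contractions of neighbouring arguments, and multiplication by the last
argument. On elementary tensors the cup product sends the first `q + 1` faces of `f ⊔ g` to the
corresponding faces of `f` (cupped with `g`) and the last `p + 1` to the faces of `g` (cupped
with `f`). Only the last face of `∂f ⊔ g` and the first face of `f ⊔ ∂g` are left over; since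
the cup product is balanced they are equal, and they cancel because they carry the signs
`(-1)^(q+1)` and `(-1)^q`. -/

section Faces

variable {D V : Type*} [Ring D] [AddCommGroup V] [Module D V] [Module Dᵐᵒᵖ V] {q : ℕ}

def hochLeftMul (f : (Fin q → D) → V) : (Fin (q + 1) → D) → V := fun a =>
  a 0 • f (Fin.tail a)

def hochContract (j : Fin q) (f : (Fin q → D) → V) : (Fin (q + 1) → D) → V := fun a =>
  f (contractArg q a j)

def hochRightMul (f : (Fin q → D) → V) : (Fin (q + 1) → D) → V := fun a =>
  MulOpposite.op (a (Fin.last q)) • f (Fin.init a)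

theorem hochD_eq_sum (f : (Fin q → D) → V) :
    hochD q f = hochLeftMul f + ∑ j : Fin q, (-1 : ℤ) ^ ((j : ℕ) + 1) • hochContract j f
      + (-1 : ℤ) ^ (q + 1) • hochRightMul f := by
  ext a
  simp only [hochD, hochLeftMul, hochContract, hochRightMul, Pi.add_apply, Pi.smul_apply,
    Finset.sum_apply]

end Faces

section Contract

variable {D : Type*} [Mul D]

theorem contractArg_castAdd_apply_left {q p : ℕ} (a : Fin (q + p + 1) → D) (j i : Fin q)
    (hi : (i : ℕ) < q + p) :
    contractArg (q + p) a (Fin.castAdd p j) ⟨i, hi⟩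
      = contractArg q (fun t : Fin (q + 1) => a ⟨t, by omega⟩) j i := by
  simp only [contractArg, Fin.ext_iff, Fin.val_castAdd]
  split_ifs <;> rfl

theorem contractArg_castAdd_apply_right {q p : ℕ} (a : Fin (q + p + 1) → D) (j : Fin q)
    (i : Fin p) (hi : q + (i : ℕ) < q + p) :
    contractArg (q + p) a (Fin.castAdd p j) ⟨q + i, hi⟩ = a ⟨q + i + 1, by omega⟩ := by
  simp only [contractArg, Fin.ext_iff, Fin.val_castAdd]
  split_ifs <;> first | rfl | omega

theorem contractArg_natAdd_apply_left {q p : ℕ} (a : Fin (q + p + 1) → D) (j : Fin p)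
    (i : Fin q) (hi : (i : ℕ) < q + p) :
    contractArg (q + p) a (Fin.natAdd q j) ⟨i, hi⟩ = a ⟨i, by omega⟩ := by
  simp only [contractArg, Fin.ext_iff, Fin.val_natAdd]
  split_ifs <;> first | rfl | omega

theorem contractArg_natAdd_apply_right {q p : ℕ} (a : Fin (q + p + 1) → D) (j i : Fin p)
    (hi : q + (i : ℕ) < q + p) :
    contractArg (q + p) a (Fin.natAdd q j) ⟨q + i, hi⟩
      = contractArg p (fun t : Fin (p + 1) => a ⟨q + t, by omega⟩) j i := by
  simp only [contractArg, Fin.ext_iff, Fin.val_natAdd]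
  split_ifs <;> first | rfl | omega

theorem contractArg_zero {n : ℕ} (a : Fin (n + 2) → D) :
    contractArg (n + 1) a 0 = Fin.cons (a 0 * a 1) fun i => a i.succ.succ := by
  funext i
  cases i using Fin.cases with
  | zero => rfl
  | succ i => simp [contractArg, Fin.succ_ne_zero]

theorem contractArg_succ {n : ℕ} (a : Fin (n + 2) → D) (j : Fin n) :
    contractArg (n + 1) a j.succ = Fin.cons (a 0) (contractArg n (Fin.tail a) j) := by
  funext i
  cases i using Fin.cases with
  | zero => simp [contractArg, (Fin.succ_ne_zero j).symm]
  | succ i => simp [contractArg, Fin.tail]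

end Contract

theorem prod_ofFn_contractArg {D : Type*} [Monoid D] {m : ℕ} (a : Fin (m + 1) → D)
    (j : Fin m) : (List.ofFn (contractArg m a j)).prod = (List.ofFn a).prod := by
  induction m with
  | zero => exact j.elim0
  | succ n ih =>
    cases j using Fin.cases with
    | zero => simp [contractArg_zero, List.ofFn_succ, mul_assoc]
    | succ j => simp [contractArg_succ, List.ofFn_succ, ih, Fin.tail]

theorem List.prod_ofFn_succ {D : Type*} [Monoid D] {n : ℕ} (a : Fin (n + 1) → D) :
    (List.ofFn a).prod = a 0 * (List.ofFn fun i => a i.succ).prod := by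
  rw [List.ofFn_succ, List.prod_cons]

theorem List.prod_ofFn_castSucc {D : Type*} [Monoid D] {n : ℕ} (a : Fin (n + 1) → D) :
    (List.ofFn a).prod = (List.ofFn fun i => a i.castSucc).prod * a (Fin.last n) := by
  rw [List.ofFn_succ', List.concat_eq_append, List.prod_append, List.prod_singleton]

section Cup

variable {k B C M N : Type*} [Field k] [Ring B] [Ring C] [AddCommGroup M] [Module k M]
  [Module Bᵐᵒᵖ M] [AddCommGroup N] [Module k N] [Module C N]

theorem lmulG_apply {R V : Type*} [Monoid R] [AddCommMonoid V] [Module k V]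
    [DistribMulAction R V] [SMulCommClass R k V] (r : R) (v : V) :
    lmulG k r v = r • v := rfl

@[simps]
noncomputable def cupFunLeftHom (q p r : ℕ) (hr : r = q + p) (g : (Fin p → C) → N)
    (b : Fin r → B) (c : Fin r → C) : ((Fin q → B) → M) →+ M ⊗[k] N where
  toFun f := cupFun q p r hr f g b c
  map_zero' := by simp [cupFun]
  map_add' f₁ f₂ := by simp [cupFun, TensorProduct.add_tmul]

@[simps]
noncomputable def cupFunRightHom (q p r : ℕ) (hr : r = q + p) (f : (Fin q → B) → M)
    (b : Fin r → B) (c : Fin r → C) : ((Fin p → C) → N) →+ M ⊗[k] N where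
  toFun g := cupFun q p r hr f g b c
  map_zero' := by simp [cupFun]
  map_add' g₁ g₂ := by simp [cupFun, TensorProduct.tmul_add]

theorem cupFun_hochD_left [Module B M] {q p r : ℕ} (hr : r = q + 1 + p) (f : (Fin q → B) → M)
    (g : (Fin p → C) → N) (b : Fin r → B) (c : Fin r → C) :
    cupFun (k := k) (q + 1) p r hr (hochD q f) g b c
      = cupFun (q + 1) p r hr (hochLeftMul f) g b c
        + ∑ j : Fin q,
            (-1 : ℤ) ^ ((j : ℕ) + 1) • cupFun (q + 1) p r hr (hochContract j f) g b c
        + (-1 : ℤ) ^ (q + 1) • cupFun (q + 1) p r hr (hochRightMul f) g b c := by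
  simp only [hochD_eq_sum, ← cupFunLeftHom_apply, map_add, map_sum, map_zsmul]

theorem cupFun_hochD_right [Module Cᵐᵒᵖ N] {q p r : ℕ} (hr : r = q + (p + 1))
    (f : (Fin q → B) → M) (g : (Fin p → C) → N) (b : Fin r → B) (c : Fin r → C) :
    cupFun (k := k) q (p + 1) r hr f (hochD p g) b c
      = cupFun q (p + 1) r hr f (hochLeftMul g) b c
        + ∑ j : Fin p,
            (-1 : ℤ) ^ ((j : ℕ) + 1) • cupFun q (p + 1) r hr f (hochContract j g) b c
        + (-1 : ℤ) ^ (p + 1) • cupFun q (p + 1) r hr f (hochRightMul g) b c := by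
  simp only [hochD_eq_sum, ← cupFunRightHom_apply, map_add, map_sum, map_zsmul]

theorem cupFun_hochLeftMul_left [Module B M] [SMulCommClass B k M] [SMulCommClass B Bᵐᵒᵖ M]
    [SMulCommClass C k N] {q p : ℕ} (f : (Fin q → B) → M) (g : (Fin p → C) → N)
    (b : Fin (q + p + 1) → B) (c : Fin (q + p + 1) → C) (h : q + p + 1 = q + 1 + p) :
    cupFun (k := k) (q + 1) p (q + p + 1) h (hochLeftMul f) g b c
      = TensorProduct.map (lmulG k (b 0)) (lmulG k (c 0))
          (cupFun q p (q + p) rfl f g (Fin.tail b) (Fin.tail c)) := by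
  simp only [cupFun, hochLeftMul, TensorProduct.map_tmul, lmulG_apply, List.ofFn_succ,
    List.prod_cons, mul_smul, (smul_comm (b _) (MulOpposite.op _) _).symm]
  simp only [Nat.add_right_comm]
  rfl

theorem cupFun_hochContract_left {q p : ℕ} (f : (Fin q → B) → M) (g : (Fin p → C) → N)
    (b : Fin (q + p + 1) → B) (c : Fin (q + p + 1) → C) (h : q + p + 1 = q + 1 + p)
    (j : Fin q) :
    cupFun (k := k) (q + 1) p (q + p + 1) h (hochContract j f) g b c
      = cupFun q p (q + p) rfl f g (contractArg (q + p) b (Fin.castAdd p j))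
          (contractArg (q + p) c (Fin.castAdd p j)) := by
  simp only [cupFun, hochContract, contractArg_castAdd_apply_left, contractArg_castAdd_apply_right]
  rw [prod_ofFn_contractArg (fun t : Fin (q + 1) => c ⟨t, by omega⟩)]
  simp only [Nat.add_right_comm]

theorem cupFun_hochContract_right {q p : ℕ} (f : (Fin q → B) → M) (g : (Fin p → C) → N)
    (b : Fin (q + p + 1) → B) (c : Fin (q + p + 1) → C) (h : q + p + 1 = q + (p + 1))
    (j : Fin p) :
    cupFun (k := k) q (p + 1) (q + p + 1) h f (hochContract j g) b c
      = cupFun q p (q + p) rfl f g (contractArg (q + p) b (Fin.natAdd q j))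
          (contractArg (q + p) c (Fin.natAdd q j)) := by
  simp only [cupFun, hochContract, contractArg_natAdd_apply_left, contractArg_natAdd_apply_right]
  rw [prod_ofFn_contractArg (fun t : Fin (p + 1) => b ⟨q + t, by omega⟩)]

theorem cupFun_hochRightMul_right [SMulCommClass Bᵐᵒᵖ k M] [Module Cᵐᵒᵖ N]
    [SMulCommClass Cᵐᵒᵖ k N] [SMulCommClass C Cᵐᵒᵖ N] {q p : ℕ} (f : (Fin q → B) → M)
    (g : (Fin p → C) → N) (b : Fin (q + p + 1) → B) (c : Fin (q + p + 1) → C)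
    (h : q + p + 1 = q + (p + 1)) :
    cupFun (k := k) q (p + 1) (q + p + 1) h f (hochRightMul g) b c
      = TensorProduct.map (lmulG k (MulOpposite.op (b (Fin.last (q + p)))))
          (lmulG k (MulOpposite.op (c (Fin.last (q + p)))))
          (cupFun q p (q + p) rfl f g (Fin.init b) (Fin.init c)) := by
  simp only [cupFun, hochRightMul, TensorProduct.map_tmul, lmulG_apply]
  congr 1
  · rw [List.prod_ofFn_castSucc, MulOpposite.op_mul, mul_smul]
    rfl
  · rw [← smul_comm (List.prod _) (MulOpposite.op (c _))]
    rfl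

theorem cupFun_hochRightMul_hochLeftMul {q p r : ℕ}
    (f : (Fin q → B) → M) (g : (Fin p → C) → N) (b : Fin r → B) (c : Fin r → C)
    (h : r = q + 1 + p) (h' : r = q + (p + 1)) :
    cupFun (k := k) (q + 1) p r h (hochRightMul f) g b c
      = cupFun q (p + 1) r h' f (hochLeftMul g) b c := by
  simp only [cupFun, hochRightMul, hochLeftMul]
  congr 1
  · rw [List.prod_ofFn_succ, MulOpposite.op_mul, mul_smul]
    simp only [Nat.add_right_comm]
    rfl
  · rw [List.prod_ofFn_castSucc, mul_smul]
    simp only [Nat.add_right_comm]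
    rfl

end Cup

/-- the Leibniz rule `∂(f ⊔ g) = ∂f ⊔ g + (−1)^q f ⊔ ∂g`. -/
theorem cup_product_leibniz (q p : ℕ)
    (f : MultilinearMap k (fun _ : Fin q => B) M)
    (g : MultilinearMap k (fun _ : Fin p => C) N)
    (b : Fin (q + p + 1) → B) (c : Fin (q + p + 1) → C) :
    hochDT (q + p) (cupFun (k := k) q p (q + p) rfl ⇑f ⇑g) b c
      = cupFun (k := k) (q + 1) p (q + p + 1) (by omega) (hochD q ⇑f) ⇑g b c
        + (-1 : ℤ) ^ q •
            cupFun (k := k) q (p + 1) (q + p + 1) (by omega) ⇑f (hochD p ⇑g) b c := by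
  rw [cupFun_hochD_left, cupFun_hochD_right, cupFun_hochLeftMul_left, cupFun_hochRightMul_right,
    cupFun_hochRightMul_hochLeftMul (h' := by omega)]
  simp only [cupFun_hochContract_left, cupFun_hochContract_right]
  simp only [hochDT, Fin.sum_univ_add, Fin.val_castAdd, Fin.val_natAdd, smul_add,
    Finset.smul_sum, smul_smul, ← pow_add, ← Nat.add_assoc]
  module
end
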